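/- arXiv:0912.1809 — 2 statements merged into one kernel-verified Lean document; each statement's English description precedes it below -/
import Mathlib

section
/- If a smooth function g on a smooth hypersurface Σ ⊂ ℝⁿ⁺¹ satisfies Δ_Σ g − (1/2)⟨X, ∇_Σ g⟩ + |∇_Σ g|² + q = 0 with q ≥ 0, then for every smooth compactly supported η, ∫_Σ η² q e^{−|X|²/4} ≤ ∫_Σ |∇_Σ η|² e^{−|X|²/4}. -/
open Real MeasureTheory Metric Filter
open scoped RealInnerProductSpace ENNReal NNReal

noncomputable section

abbrev E (n : ℕ) : Type := EuclideanSpace ℝ (Fin n)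

variable {n : ℕ}

/-- `√(1 + |Du|²)`, the area element of the graph of `u`. -/
def aEl (u : E n → ℝ) (x : E n) : ℝ := Real.sqrt (1 + ‖gradient u x‖ ^ 2)

/-- The vector field `Du/√(1+|Du|²)`. -/
def Vfield (u : E n → ℝ) (x : E n) : E n := (aEl u x)⁻¹ • gradient u x

/-- `div (Du/√(1+|Du|²))`. -/
def divV (u : E n → ℝ) (x : E n) : ℝ :=
  ∑ i, fderiv ℝ (fun y => Vfield u y i) x (EuclideanSpace.single i 1)

/-- The self-shrinker equation for an entire graph. -/
def ShrinkerEq (u : E n → ℝ) : Prop :=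
  ∀ x, divV u x = (⟪x, gradient u x⟫ - u x) / (2 * aEl u x)

/-- The mean curvature of the graph of `u` with respect to the upward unit normal. -/
def meanCurv (u : E n → ℝ) (x : E n) : ℝ := -divV u x

/-- The position vector `X = (x, u x)` of a point of the graph. -/
def Pos (u : E n → ℝ) (x : E n) : E (n + 1) :=
  (WithLp.equiv 2 (Fin (n + 1) → ℝ)).symm (Fin.snoc ((WithLp.equiv 2 (Fin n → ℝ)) x) (u x))

/-- The upward unit normal `n = (-Du, 1)/√(1+|Du|²)` at the point of the graph over `x`. -/
def NmlAt (u : E n → ℝ) (x : E n) : E (n + 1) :=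
  (WithLp.equiv 2 (Fin (n + 1) → ℝ)).symm
    (Fin.snoc (fun i => -(Vfield u x i)) ((aEl u x)⁻¹))

/-- Projection of `ℝ^{n+1}` onto the first `n` coordinates. -/
def projE (p : E (n + 1)) : E n :=
  (WithLp.equiv 2 (Fin n → ℝ)).symm fun i => p i.castSucc

/-- The unit normal of the graph, extended to `ℝ^{n+1}` independently of the last coordinate. -/
def Nml (u : E n → ℝ) (p : E (n + 1)) : E (n + 1) := NmlAt u (projE p)

/-- The inverse induced metric `g^{ij} = δ_{ij} - u_i u_j/(1+|Du|²)` of the graph. -/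
def ginv (u : E n → ℝ) (x : E n) (i j : Fin n) : ℝ :=
  (if i = j then 1 else 0) - gradient u x i * gradient u x j / (aEl u x) ^ 2

/-- The Hessian `u_{ij}` of `u`. -/
def hess (u : E n → ℝ) (x : E n) (i j : Fin n) : ℝ :=
  fderiv ℝ (fun y => gradient u y j) x (EuclideanSpace.single i 1)

/-- `|A|²`, the squared norm of the second fundamental form of the graph of `u`:
`|A|² = g^{ik} g^{jl} h_{ij} h_{kl}` with `h_{ij} = u_{ij}/√(1+|Du|²)`. -/
def A2 (u : E n → ℝ) (x : E n) : ℝ :=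
  (∑ i, ∑ j, ∑ k, ∑ l, ginv u x i k * ginv u x j l * hess u x i j * hess u x k l) /
    (aEl u x) ^ 2

/-- Coordinate components `g^{ij} ∂_j f` of the tangential gradient. -/
def gradCoord (u f : E n → ℝ) (x : E n) (i : Fin n) : ℝ :=
  ∑ j, ginv u x i j * gradient f x j

/-- The tangential gradient `∇_Σ f` (for `f` defined on the base, pulled back to the graph),
as a vector in `ℝ^{n+1}`. -/
def gradSigma (u f : E n → ℝ) (x : E n) : E (n + 1) :=
  (WithLp.equiv 2 (Fin (n + 1) → ℝ)).symm
    (Fin.snoc (fun i => gradCoord u f x i) (∑ i, gradient u x i * gradCoord u f x i))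

/-- The Laplace–Beltrami operator of the graph:
`Δ_Σ f = (1/√g) ∂_i (√g g^{ij} ∂_j f)`. -/
def lapSigma (u f : E n → ℝ) (x : E n) : ℝ :=
  (aEl u x)⁻¹ *
    ∑ i, fderiv ℝ (fun y => aEl u y * gradCoord u f y i) x (EuclideanSpace.single i 1)

/-- The tangential gradient `∇_Σ η` of an ambient function `η : ℝ^{n+1} → ℝ` along the graph:
the ambient gradient minus its normal component. -/
def gradSigmaAmb (u : E n → ℝ) (η : E (n + 1) → ℝ) (x : E n) : E (n + 1) :=
  gradient η (Pos u x) - ⟪gradient η (Pos u x), NmlAt u x⟫ • NmlAt u x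

/-- `Vol(Σ ∩ B_R)`: the area of the part of the graph inside the ball of radius `R`
in `ℝ^{n+1}`, computed by the area formula. -/
def sVol (u : E n → ℝ) (R : ℝ) : ℝ := ∫ x in {x : E n | ‖Pos u x‖ ≤ R}, aEl u x

/-- `M_R = sup_{|x| ≤ R} |u|`. -/
def supBall (u : E n → ℝ) (R : ℝ) : ℝ := ⨆ x : Metric.closedBall (0 : E n) R, |u x.1|

end
section helpers
variable {m : ℕ}

lemma inner_E (x y : E m) : ⟪x, y⟫ = ∑ i, x i * y i := by
  simp [PiLp.inner_apply, RCLike.inner_apply, conj_trivial]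
  exact Finset.sum_congr rfl fun i _ => mul_comm _ _

lemma normsq_E (x : E m) : ‖x‖ ^ 2 = ∑ i, x i ^ 2 := by
  rw [← real_inner_self_eq_norm_sq, inner_E]
  exact Finset.sum_congr rfl fun i _ => (sq (x i)).symm

lemma fderiv_eq_inner_gradient (f : E m → ℝ) (x v : E m) :
    fderiv ℝ f x v = ⟪gradient f x, v⟫ := by
  rw [show gradient f x = (InnerProductSpace.toDual ℝ _).symm (fderiv ℝ f x) from rfl,
    InnerProductSpace.toDual_symm_apply]

lemma gradient_component (f : E m → ℝ) (x : E m) (i : Fin m) :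
    gradient f x i = fderiv ℝ f x (EuclideanSpace.single i 1) := by
  rw [fderiv_eq_inner_gradient, inner_E]
  simp [EuclideanSpace.single_apply]

lemma contDiff_gradient (f : E m → ℝ) (hf : ContDiff ℝ (⊤ : ℕ∞) f) :
    ContDiff ℝ (⊤ : ℕ∞) (gradient f) := by
  have h1 : ContDiff ℝ (⊤ : ℕ∞) (fderiv ℝ f) := hf.fderiv_right (by simp)
  exact ((InnerProductSpace.toDual ℝ (E m)).symm.contDiff).comp h1

lemma contDiff_gradient_comp (f : E m → ℝ) (hf : ContDiff ℝ (⊤ : ℕ∞) f) (i : Fin m) :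
    ContDiff ℝ (⊤ : ℕ∞) (fun x => gradient f x i) := by
  exact (EuclideanSpace.proj (𝕜 := ℝ) i).contDiff.comp (contDiff_gradient f hf)

variable (u f : E m → ℝ)

lemma one_le_aEl (x : E m) : 1 ≤ aEl u x := by
  rw [aEl]
  exact Real.one_le_sqrt.2 (le_add_of_nonneg_right (sq_nonneg _))

lemma aEl_pos (x : E m) : 0 < aEl u x := lt_of_lt_of_le one_pos (one_le_aEl u x)

lemma aEl_ne (x : E m) : aEl u x ≠ 0 := (aEl_pos u x).ne'

lemma aEl_sq (x : E m) : aEl u x ^ 2 = 1 + ‖gradient u x‖ ^ 2 := by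
  rw [aEl, Real.sq_sqrt (by positivity)]

variable (hu : ContDiff ℝ (⊤ : ℕ∞) u) (hf : ContDiff ℝ (⊤ : ℕ∞) f)
include hu

lemma contDiff_aEl : ContDiff ℝ (⊤ : ℕ∞) (aEl u) := by
  rw [contDiff_iff_contDiffAt]
  intro x
  refine ContDiffAt.sqrt ?_ (by nlinarith [sq_nonneg (‖gradient u x‖)])

  exact ((contDiff_const.add ((contDiff_norm_sq ℝ).comp (contDiff_gradient u hu))).contDiffAt)

lemma contDiff_ginv (i j : Fin m) : ContDiff ℝ (⊤ : ℕ∞) (fun x => ginv u x i j) := by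
  unfold ginv
  refine contDiff_const.sub ?_
  exact ((contDiff_gradient_comp u hu i).mul (contDiff_gradient_comp u hu j)).div
    ((contDiff_aEl u hu).pow 2) (fun x => pow_ne_zero 2 (aEl_ne u x))

include hf in
lemma contDiff_gradCoord (i : Fin m) : ContDiff ℝ (⊤ : ℕ∞) (fun x => gradCoord u f x i) := by
  unfold gradCoord
  exact ContDiff.sum fun j _ => (contDiff_ginv u hu i j).mul (contDiff_gradient_comp f hf j)

end helpers
section helpers2
variable {m : ℕ} (u : E m → ℝ)

lemma Pos_castSucc (x : E m) (i : Fin m) : Pos u x i.castSucc = x i := by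
  simp [Pos]

lemma Pos_last (x : E m) : Pos u x (Fin.last m) = u x := by
  simp [Pos]

lemma norm_Pos_sq (x : E m) : ‖Pos u x‖ ^ 2 = ‖x‖ ^ 2 + u x ^ 2 := by
  rw [normsq_E, normsq_E, Fin.sum_univ_castSucc]
  simp [Pos_castSucc, Pos_last]

lemma norm_le_norm_Pos (x : E m) : ‖x‖ ≤ ‖Pos u x‖ := by
  nlinarith [norm_Pos_sq u x, norm_nonneg x, norm_nonneg (Pos u x), sq_nonneg (u x)]

variable (hu : ContDiff ℝ (⊤ : ℕ∞) u)
include hu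

lemma contDiff_Pos : ContDiff ℝ (⊤ : ℕ∞) (Pos u) := by
  have h : ContDiff ℝ (⊤ : ℕ∞)
      (fun x : E m => (Fin.snoc ((WithLp.equiv 2 (Fin m → ℝ)) x) (u x) : Fin (m+1) → ℝ)) := by
    apply contDiff_pi.2
    intro j
    induction j using Fin.lastCases with
    | last => simpa [Fin.snoc_last] using hu
    | cast i => simpa [Fin.snoc_castSucc] using (EuclideanSpace.proj (𝕜 := ℝ) i).contDiff
  exact ((EuclideanSpace.equiv (Fin (m+1)) ℝ).symm.contDiff).comp h

lemma fderiv_comp_Pos (η : E (m+1) → ℝ) (hη : ContDiff ℝ (⊤ : ℕ∞) η) (x : E m) (i : Fin m) :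
    fderiv ℝ (fun y => η (Pos u y)) x (EuclideanSpace.single i 1) =
      gradient η (Pos u x) i.castSucc +
        gradient η (Pos u x) (Fin.last m) * gradient u x i := by
  have hP : DifferentiableAt ℝ (Pos u) x := ((contDiff_Pos u hu).differentiable (by simp)) x
  have hd : fderiv ℝ (fun y => η (Pos u y)) x =
      (fderiv ℝ η (Pos u x)).comp (fderiv ℝ (Pos u) x) :=
    fderiv_comp x ((hη.differentiable (by simp)) _) hP
  set v := fderiv ℝ (Pos u) x (EuclideanSpace.single i 1) with hv
  have hcomp : ∀ (j : Fin (m+1)) (w : E m → ℝ), (fun y => Pos u y j) = w →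
      DifferentiableAt ℝ w x → v j = fderiv ℝ w x (EuclideanSpace.single i 1) := by
    intro j w hw hwd
    have h1 : HasFDerivAt (fun y : E m => Pos u y j)
        ((EuclideanSpace.proj (𝕜 := ℝ) j).comp (fderiv ℝ (Pos u) x)) x :=
      (EuclideanSpace.proj (𝕜 := ℝ) j).hasFDerivAt.comp x hP.hasFDerivAt
    rw [hw] at h1
    have h0 := h1.unique hwd.hasFDerivAt
    have h2 : v j = ((EuclideanSpace.proj (𝕜 := ℝ) j).comp (fderiv ℝ (Pos u) x))
        (EuclideanSpace.single i 1) := rfl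
    rw [h2, h0]
  have hvc : ∀ j : Fin m, v j.castSucc = (EuclideanSpace.single i (1:ℝ) : E m) j := by
    intro j
    rw [hcomp j.castSucc (fun y => y j) (funext fun y => Pos_castSucc u y j)
      (EuclideanSpace.proj (𝕜 := ℝ) j).differentiableAt]
    have h3 : fderiv ℝ (fun y : E m => y j) x = EuclideanSpace.proj (𝕜 := ℝ) j :=
      (EuclideanSpace.proj (𝕜 := ℝ) j).fderiv
    rw [h3]
    rfl
  have hvl : v (Fin.last m) = gradient u x i := by
    rw [hcomp (Fin.last m) u (funext fun y => Pos_last u y)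
      ((hu.differentiable (by simp)) x), gradient_component]
  have h4 : fderiv ℝ (fun y => η (Pos u y)) x (EuclideanSpace.single i 1) =
      fderiv ℝ η (Pos u x) v := by rw [hd]; rfl
  rw [h4, fderiv_eq_inner_gradient, inner_E, Fin.sum_univ_castSucc, hvl]
  have h5 : ∀ j : Fin m, gradient η (Pos u x) j.castSucc * v j.castSucc
      = gradient η (Pos u x) j.castSucc * (EuclideanSpace.single i (1:ℝ) : E m) j := by
    intro j; rw [hvc]
  rw [Finset.sum_congr rfl fun j _ => h5 j]
  simp [EuclideanSpace.single_apply]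

omit hu in
lemma Vfield_apply (x : E m) (i : Fin m) :
    Vfield u x i = (aEl u x)⁻¹ * gradient u x i := by
  simp [Vfield]

lemma contDiff_NmlAt : ContDiff ℝ (⊤ : ℕ∞) (NmlAt u) := by
  have h : ContDiff ℝ (⊤ : ℕ∞)
      (fun x : E m => (Fin.snoc (fun i => -(Vfield u x i)) ((aEl u x)⁻¹) : Fin (m+1) → ℝ)) := by
    apply contDiff_pi.2
    intro j
    induction j using Fin.lastCases with
    | last =>
      simp only [Fin.snoc_last]; exact (contDiff_aEl u hu).inv (aEl_ne u)
    | cast i =>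
      have : ContDiff ℝ (⊤ : ℕ∞) (fun x : E m => -(Vfield u x i)) := by
        have h2 : ContDiff ℝ (⊤ : ℕ∞) (fun x : E m => Vfield u x i) := by
          rw [show (fun x : E m => Vfield u x i) =
            fun x => (aEl u x)⁻¹ * gradient u x i from funext fun x => Vfield_apply u x i]
          exact ((contDiff_aEl u hu).inv (aEl_ne u)).mul (contDiff_gradient_comp u hu i)
        exact h2.neg
      simpa [Fin.snoc_castSucc] using this
  exact ((EuclideanSpace.equiv (Fin (m+1)) ℝ).symm.contDiff).comp h

end helpers2
section helpers3
variable {m : ℕ} (u f : E m → ℝ)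

lemma gradSigma_castSucc (x : E m) (i : Fin m) :
    gradSigma u f x i.castSucc = gradCoord u f x i := by simp [gradSigma]

lemma gradSigma_last (x : E m) :
    gradSigma u f x (Fin.last m) = ∑ i, gradient u x i * gradCoord u f x i := by
  simp [gradSigma]

lemma inner_Pos_gradSigma (x : E m) : ⟪Pos u x, gradSigma u f x⟫ =
    ∑ i, (x i + u x * gradient u x i) * gradCoord u f x i := by
  rw [inner_E, Fin.sum_univ_castSucc]
  simp only [Pos_castSucc, Pos_last, gradSigma_castSucc, gradSigma_last]
  rw [Finset.mul_sum, ← Finset.sum_add_distrib]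
  exact Finset.sum_congr rfl fun i _ => by ring

lemma NmlAt_castSucc (x : E m) (i : Fin m) :
    NmlAt u x i.castSucc = -((aEl u x)⁻¹ * gradient u x i) := by
  simp [NmlAt, Vfield]

lemma NmlAt_last (x : E m) : NmlAt u x (Fin.last m) = (aEl u x)⁻¹ := by simp [NmlAt]

lemma inner_NmlAt_gradSigma (x : E m) : ⟪NmlAt u x, gradSigma u f x⟫ = 0 := by
  rw [inner_E, Fin.sum_univ_castSucc]
  simp only [NmlAt_castSucc, NmlAt_last, gradSigma_castSucc, gradSigma_last]
  rw [Finset.mul_sum, ← Finset.sum_add_distrib]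
  apply Finset.sum_eq_zero; intro i _; ring

lemma inner_gradSigmaAmb (η : E (m+1) → ℝ) (x : E m) :
    ⟪gradSigmaAmb u η x, gradSigma u f x⟫ =
      ∑ i, (gradient η (Pos u x) i.castSucc +
        gradient η (Pos u x) (Fin.last m) * gradient u x i) * gradCoord u f x i := by
  rw [gradSigmaAmb, inner_sub_left, real_inner_smul_left, inner_NmlAt_gradSigma,
    mul_zero, sub_zero, inner_E, Fin.sum_univ_castSucc]
  simp only [gradSigma_castSucc, gradSigma_last]
  rw [Finset.mul_sum, ← Finset.sum_add_distrib]
  exact Finset.sum_congr rfl fun i _ => by ring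

lemma sum_fderiv_H (x : E m) :
    ∑ i, fderiv ℝ (fun y => aEl u y * gradCoord u f y i) x (EuclideanSpace.single i 1)
      = aEl u x * lapSigma u f x := by
  rw [lapSigma, ← mul_assoc, mul_inv_cancel₀ (aEl_ne u x), one_mul]

end helpers3
section helpers4
variable {m : ℕ}

/-- The Gaussian weight in base coordinates. -/
noncomputable def Wf (u : E m → ℝ) (y : E m) : ℝ :=
  Real.exp ((-1/4 : ℝ) * ((⟪y, y⟫ : ℝ) + u y * u y))

variable (u : E m → ℝ)

lemma Wf_eq (x : E m) : Wf u x = Real.exp (-‖Pos u x‖ ^ 2 / 4) := by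
  rw [Wf, norm_Pos_sq, real_inner_self_eq_norm_sq]
  congr 1
  ring

lemma Wf_pos (x : E m) : 0 < Wf u x := Real.exp_pos _

variable (hu : ContDiff ℝ (⊤ : ℕ∞) u)
include hu

lemma contDiff_Wf : ContDiff ℝ (⊤ : ℕ∞) (Wf u) := by
  apply Real.contDiff_exp.comp
  exact contDiff_const.mul ((contDiff_id.inner ℝ contDiff_id).add (hu.mul hu))

lemma fderiv_Wf (x : E m) (i : Fin m) :
    fderiv ℝ (Wf u) x (EuclideanSpace.single i 1)
      = Wf u x * (-(x i + u x * gradient u x i) / 2) := by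
  have hud : HasFDerivAt u (fderiv ℝ u x) x := ((hu.differentiable (by simp)) x).hasFDerivAt
  have h1 : HasFDerivAt (fun y : E m => (⟪y, y⟫ : ℝ) + u y * u y)
      (((fderivInnerCLM ℝ (x, x)).comp
        ((ContinuousLinearMap.id ℝ (E m)).prod (ContinuousLinearMap.id ℝ (E m)))) +
        (u x • fderiv ℝ u x + u x • fderiv ℝ u x)) x :=
    ((hasFDerivAt_id x).inner ℝ (hasFDerivAt_id x)).add (hud.mul hud)
  have h2 := (h1.const_mul ((-1 : ℝ)/4)).exp
  rw [show Wf u = fun y : E m => Real.exp ((-1/4 : ℝ) * ((⟪y, y⟫ : ℝ) + u y * u y)) from rfl,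
    h2.fderiv]
  have hxv : (⟪x, EuclideanSpace.single i (1:ℝ)⟫ : ℝ) = x i := by
    rw [inner_E]; simp [EuclideanSpace.single_apply]
  have hvx : (⟪EuclideanSpace.single i (1:ℝ), x⟫ : ℝ) = x i := by
    rw [inner_E]; simp [EuclideanSpace.single_apply]
  have hgi : fderiv ℝ u x (EuclideanSpace.single i 1) = gradient u x i :=
    (gradient_component u x i).symm
  simp only [ContinuousLinearMap.smul_apply, ContinuousLinearMap.add_apply,
    ContinuousLinearMap.comp_apply, ContinuousLinearMap.prod_apply,
    ContinuousLinearMap.coe_id', id_eq, fderivInnerCLM_apply, hxv, hvx, hgi,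
    smul_eq_mul]
  ring

end helpers4

section helpers5
variable {m : ℕ}

lemma integrable_fderiv_app (F : E m → ℝ) (hF : ContDiff ℝ (⊤ : ℕ∞) F)
    (hFc : HasCompactSupport F) (v : E m) :
    Integrable fun x : E m => fderiv ℝ F x v := by
  have hdc : Continuous fun x => fderiv ℝ F x v :=
    (ContinuousLinearMap.apply ℝ ℝ v).continuous.comp
      (ContDiff.continuous (n := (⊤ : ℕ∞)) (hF.fderiv_right (by simp)))
  have hds : HasCompactSupport fun x => fderiv ℝ F x v :=
    (hFc.fderiv ℝ).comp_left (g := fun L : E m →L[ℝ] ℝ => L v) rfl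
  exact hdc.integrable_of_hasCompactSupport hds

lemma integral_fderiv_eq_zero (F : E m → ℝ) (hF : ContDiff ℝ (⊤ : ℕ∞) F)
    (hFc : HasCompactSupport F) (v : E m) :
    ∫ x : E m, fderiv ℝ F x v = 0 := by
  have h1 : Integrable F := hF.continuous.integrable_of_hasCompactSupport hFc
  have h2 : Integrable fun x => fderiv ℝ F x v := integrable_fderiv_app F hF hFc v
  have h3 := integral_mul_fderiv_eq_neg_fderiv_mul_of_integrable
    (f := fun _ : E m => (1:ℝ)) (g := F) (v := v) (μ := volume)
    (by simpa using (integrable_zero (E m) ℝ volume))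
    (by simpa using h2) (by simpa using h1)
    (fun x _ => differentiableAt_const (1:ℝ)) (fun x _ => (hF.differentiable (by simp)) x)
  simpa using h3

end helpers5
section helpers6
variable {m : ℕ} (u g : E m → ℝ) (hu : ContDiff ℝ (⊤ : ℕ∞) u) (hg : ContDiff ℝ (⊤ : ℕ∞) g)
  (η : E (m+1) → ℝ) (hη : ContDiff ℝ (⊤ : ℕ∞) η)
include hu hg hη

lemma fderiv_F_apply (x : E m) (i : Fin m) :
    fderiv ℝ (fun y => η (Pos u y) ^ 2 * Wf u y * (aEl u y * gradCoord u g y i)) x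
      (EuclideanSpace.single i 1)
    = η (Pos u x) ^ 2 * Wf u x *
        fderiv ℝ (fun y => aEl u y * gradCoord u g y i) x (EuclideanSpace.single i 1)
      + (-(η (Pos u x) ^ 2 * Wf u x) / 2 * aEl u x) *
          ((x i + u x * gradient u x i) * gradCoord u g x i)
      + (2 * η (Pos u x) * Wf u x * aEl u x) *
          ((gradient η (Pos u x) i.castSucc +
            gradient η (Pos u x) (Fin.last m) * gradient u x i) * gradCoord u g x i) := by
  have hφ : ContDiff ℝ (⊤ : ℕ∞) (fun y => η (Pos u y)) := hη.comp (contDiff_Pos u hu)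
  have hφ2 : ContDiff ℝ (⊤ : ℕ∞) (fun y => η (Pos u y) ^ 2) := hφ.pow 2
  have hW : ContDiff ℝ (⊤ : ℕ∞) (Wf u) := contDiff_Wf u hu
  have hP : ContDiff ℝ (⊤ : ℕ∞) (fun y => η (Pos u y) ^ 2 * Wf u y) := hφ2.mul hW
  have hH : ContDiff ℝ (⊤ : ℕ∞) (fun y => aEl u y * gradCoord u g y i) :=
    (contDiff_aEl u hu).mul (contDiff_gradCoord u g hu hg i)
  have h1 : fderiv ℝ (fun y => η (Pos u y) ^ 2 * Wf u y * (aEl u y * gradCoord u g y i)) x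
      = (η (Pos u x) ^ 2 * Wf u x) • fderiv ℝ (fun y => aEl u y * gradCoord u g y i) x
        + (aEl u x * gradCoord u g x i) • fderiv ℝ (fun y => η (Pos u y) ^ 2 * Wf u y) x :=
    fderiv_fun_mul (hP.differentiable (by simp) x) (hH.differentiable (by simp) x)
  have h2 : fderiv ℝ (fun y => η (Pos u y) ^ 2 * Wf u y) x
      = (η (Pos u x) ^ 2) • fderiv ℝ (Wf u) x
        + Wf u x • fderiv ℝ (fun y => η (Pos u y) ^ 2) x :=
    fderiv_fun_mul (hφ2.differentiable (by simp) x) (hW.differentiable (by simp) x)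
  have h3 : fderiv ℝ (fun y => η (Pos u y) ^ 2) x
      = η (Pos u x) • fderiv ℝ (fun y => η (Pos u y)) x
        + η (Pos u x) • fderiv ℝ (fun y => η (Pos u y)) x := by
    rw [show (fun y => η (Pos u y) ^ 2) = fun y => η (Pos u y) * η (Pos u y) from
      funext fun y => sq (η (Pos u y))]
    exact fderiv_fun_mul (hφ.differentiable (by simp) x) (hφ.differentiable (by simp) x)
  rw [h1]
  simp only [ContinuousLinearMap.add_apply, ContinuousLinearMap.smul_apply, smul_eq_mul,
    h2, h3, fderiv_Wf u hu x i, fderiv_comp_Pos u hu η hη x i]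
  ring

lemma key_pointwise (x : E m) :
    ∑ i, fderiv ℝ (fun y => η (Pos u y) ^ 2 * Wf u y * (aEl u y * gradCoord u g y i)) x
      (EuclideanSpace.single i 1)
    = Wf u x * aEl u x * (2 * η (Pos u x) * ⟪gradSigmaAmb u η x, gradSigma u g x⟫
      + η (Pos u x) ^ 2 * (lapSigma u g x - 1/2 * ⟪Pos u x, gradSigma u g x⟫)) := by
  rw [Finset.sum_congr rfl fun i _ => fderiv_F_apply u g hu hg η hη x i]
  rw [Finset.sum_add_distrib, Finset.sum_add_distrib, ← Finset.mul_sum, ← Finset.mul_sum,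
    ← Finset.mul_sum, sum_fderiv_H u g x, ← inner_Pos_gradSigma u g x,
    ← inner_gradSigmaAmb u g η x]
  ring

end helpers6

/-- if a smooth function `g` on the graph hypersurface `Σ = Graph(u)`
satisfies `Δ_Σ g - (1/2)⟨X, ∇_Σ g⟩ + |∇_Σ g|² + q = 0` with `q ≥ 0`, then for every
smooth compactly supported `η`, `∫_Σ η² q e^{-|X|²/4} ≤ ∫_Σ |∇_Σ η|² e^{-|X|²/4}`. -/
theorem stmt_6 (n : ℕ) (u : E n → ℝ) (hu : ContDiff ℝ (⊤ : ℕ∞) u)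
    (g q : E n → ℝ) (hg : ContDiff ℝ (⊤ : ℕ∞) g) (hq : Continuous q) (hq0 : ∀ x, 0 ≤ q x)
    (hpde : ∀ x, lapSigma u g x - (1 / 2) * ⟪Pos u x, gradSigma u g x⟫ +
      ‖gradSigma u g x‖ ^ 2 + q x = 0) :
    ∀ η : E (n + 1) → ℝ, ContDiff ℝ (⊤ : ℕ∞) η → HasCompactSupport η →
      ∫ x : E n, (η (Pos u x)) ^ 2 * q x *
          Real.exp (-‖Pos u x‖ ^ 2 / 4) * aEl u x ≤
        ∫ x : E n, ‖gradSigmaAmb u η x‖ ^ 2 *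
          Real.exp (-‖Pos u x‖ ^ 2 / 4) * aEl u x := by
  intro η hη hηc
  -- abbreviations
  set l : E n → ℝ := fun x => (η (Pos u x)) ^ 2 * q x *
    Real.exp (-‖Pos u x‖ ^ 2 / 4) * aEl u x with hl_def
  set r : E n → ℝ := fun x => ‖gradSigmaAmb u η x‖ ^ 2 *
    Real.exp (-‖Pos u x‖ ^ 2 / 4) * aEl u x with hr_def
  set d : E n → ℝ := fun x => ∑ i, fderiv ℝ
    (fun y => η (Pos u y) ^ 2 * Wf u y * (aEl u y * gradCoord u g y i)) x
    (EuclideanSpace.single i 1) with hd_def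
  -- support radii
  obtain ⟨R, hR⟩ : ∃ R, tsupport η ⊆ Metric.closedBall 0 R :=
    hηc.isBounded.subset_closedBall 0
  obtain ⟨R1, hR1⟩ : ∃ R1, tsupport (fderiv ℝ η) ⊆ Metric.closedBall 0 R1 :=
    (HasCompactSupport.fderiv ℝ hηc).isBounded.subset_closedBall 0
  have hφzero : ∀ x : E n, x ∉ Metric.closedBall (0 : E n) R → η (Pos u x) = 0 := by
    intro x hx
    apply image_eq_zero_of_notMem_tsupport
    intro hmem
    exact hx (mem_closedBall_zero_iff.2
      (le_trans (norm_le_norm_Pos u x) (mem_closedBall_zero_iff.1 (hR hmem))))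
  have hgradzero : ∀ x : E n, x ∉ Metric.closedBall (0 : E n) R1 →
      gradient η (Pos u x) = 0 := by
    intro x hx
    have hf0 : fderiv ℝ η (Pos u x) = 0 := by
      apply image_eq_zero_of_notMem_tsupport
      intro hmem
      exact hx (mem_closedBall_zero_iff.2
        (le_trans (norm_le_norm_Pos u x) (mem_closedBall_zero_iff.1 (hR1 hmem))))
    rw [show gradient η (Pos u x)
      = (InnerProductSpace.toDual ℝ _).symm (fderiv ℝ η (Pos u x)) from rfl, hf0, map_zero]
  -- continuity
  have hPosc : Continuous (Pos u) := (contDiff_Pos u hu).continuous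
  have hcφ : Continuous fun x : E n => η (Pos u x) := hη.continuous.comp hPosc
  have hcexp : Continuous fun x : E n => Real.exp (-‖Pos u x‖ ^ 2 / 4) :=
    Real.continuous_exp.comp (((hPosc.norm.pow 2).neg).div_const 4)
  have hca : Continuous (aEl u) := (contDiff_aEl u hu).continuous
  -- integrability of l
  have hl_int : Integrable l := by
    apply Continuous.integrable_of_hasCompactSupport
    · exact (((hcφ.pow 2).mul hq).mul hcexp).mul hca
    · exact HasCompactSupport.intro (isCompact_closedBall (0 : E n) R)
        (fun x hx => by simp [hl_def, hφzero x hx])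
  -- integrability of r
  have hamb_cont : Continuous fun x : E n => gradSigmaAmb u η x := by
    have hgη : Continuous fun x : E n => gradient η (Pos u x) :=
      (contDiff_gradient η hη).continuous.comp hPosc
    have hN : Continuous (NmlAt u) := (contDiff_NmlAt u hu).continuous
    have hinner : Continuous fun x : E n => (⟪gradient η (Pos u x), NmlAt u x⟫ : ℝ) :=
      hgη.inner hN
    unfold gradSigmaAmb
    exact hgη.sub (hinner.smul hN)
  have hambzero : ∀ x : E n, x ∉ Metric.closedBall (0 : E n) R1 →
      gradSigmaAmb u η x = 0 := by
    intro x hx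
    rw [gradSigmaAmb, hgradzero x hx]
    simp
  have hr_int : Integrable r := by
    apply Continuous.integrable_of_hasCompactSupport
    · exact ((hamb_cont.norm.pow 2).mul hcexp).mul hca
    · exact HasCompactSupport.intro (isCompact_closedBall (0 : E n) R1)
        (fun x hx => by simp [hr_def, hambzero x hx])
  -- the divergence terms
  have hFcd : ∀ i : Fin n, ContDiff ℝ (⊤ : ℕ∞)
      (fun y => η (Pos u y) ^ 2 * Wf u y * (aEl u y * gradCoord u g y i)) := by
    intro i
    exact (((hη.comp (contDiff_Pos u hu)).pow 2).mul (contDiff_Wf u hu)).mul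
      ((contDiff_aEl u hu).mul (contDiff_gradCoord u g hu hg i))
  have hFsupp : ∀ i : Fin n, HasCompactSupport
      (fun y => η (Pos u y) ^ 2 * Wf u y * (aEl u y * gradCoord u g y i)) := by
    intro i
    exact HasCompactSupport.intro (isCompact_closedBall (0 : E n) R)
      (fun x hx => by simp [hφzero x hx])
  have hd_int : Integrable d := by
    rw [hd_def]
    exact integrable_finset_sum _ fun i _ =>
      integrable_fderiv_app _ (hFcd i) (hFsupp i) _
  have hd_zero : ∫ x : E n, d x = 0 := by
    rw [hd_def]
    rw [integral_finset_sum _ fun i _ => integrable_fderiv_app _ (hFcd i) (hFsupp i) _]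
    exact Finset.sum_eq_zero fun i _ =>
      integral_fderiv_eq_zero _ (hFcd i) (hFsupp i) _
  -- pointwise inequality
  have hpt : ∀ x, l x + d x ≤ r x := by
    intro x
    have hkey := key_pointwise u g hu hg η hη x
    have hsub : lapSigma u g x - 1/2 * ⟪Pos u x, gradSigma u g x⟫
        = -‖gradSigma u g x‖ ^ 2 - q x := by
      have := hpde x; linarith
    have hWx : Real.exp (-‖Pos u x‖ ^ 2 / 4) = Wf u x := (Wf_eq u x).symm
    have hWa : 0 < Wf u x * aEl u x := mul_pos (Wf_pos u x) (aEl_pos u x)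
    have habs : |⟪gradSigmaAmb u η x, gradSigma u g x⟫|
        ≤ ‖gradSigmaAmb u η x‖ * ‖gradSigma u g x‖ := abs_real_inner_le_norm _ _
    have h0 : 0 ≤ η (Pos u x) ^ 2 * ‖gradSigma u g x‖ ^ 2 + ‖gradSigmaAmb u η x‖ ^ 2
        - 2 * η (Pos u x) * ⟪gradSigmaAmb u η x, gradSigma u g x⟫ := by
      nlinarith [sq_nonneg (|η (Pos u x)| * ‖gradSigma u g x‖ - ‖gradSigmaAmb u η x‖),
        sq_abs (η (Pos u x)), le_abs_self (η (Pos u x)), neg_abs_le (η (Pos u x)),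
        abs_nonneg (η (Pos u x)), norm_nonneg (gradSigma u g x),
        norm_nonneg (gradSigmaAmb u η x), le_abs_self
          (⟪gradSigmaAmb u η x, gradSigma u g x⟫ : ℝ), neg_abs_le
          (⟪gradSigmaAmb u η x, gradSigma u g x⟫ : ℝ),
        mul_le_mul_of_nonneg_left habs (abs_nonneg (η (Pos u x)))]
    simp only [hl_def, hr_def, hd_def, hWx, hkey, hsub]
    nlinarith [mul_nonneg hWa.le h0]
  -- conclusion
  calc ∫ x : E n, l x = (∫ x : E n, l x) + ∫ x : E n, d x := by rw [hd_zero, add_zero]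
  _ = ∫ x : E n, (l x + d x) := (integral_add hl_int hd_int).symm
  _ ≤ ∫ x : E n, r x := integral_mono (hl_int.add hd_int) hr_int hpt
end

section
/- With ω defined by ω(X₁,…,Xₙ) = det(X₁,…,Xₙ,n) for the graph of a smooth self-shrinker u, the exterior derivative satisfies the pointwise bound |dω| ≤ (1/2)√(x₁²+⋯+xₙ²+u²), where dω = (−1)^{n+1} (x·Du − u)/(2√(1+|Du|²)) dx₁∧⋯∧dx_{n+1}. -/
open Real MeasureTheory Metric Filter
open scoped RealInnerProductSpace ENNReal NNReal

/-- the coefficient of `dω` for a graphical self-shrinker satisfies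
`|dω| = |(x·Du - u)/(2√(1+|Du|²))| ≤ (1/2)√(x₁²+⋯+xₙ²+u²)`. -/
theorem stmt_8 (n : ℕ) (u : E n → ℝ) (hu : ContDiff ℝ (⊤ : ℕ∞) u) (hshr : ShrinkerEq u) :
    ∀ x : E n, |(⟪x, gradient u x⟫ - u x) / (2 * aEl u x)| ≤
      (1 / 2) * Real.sqrt (‖x‖ ^ 2 + (u x) ^ 2) := by
  intro x
  set g := gradient u x with hg
  have hcs : |⟪x, g⟫| ≤ ‖x‖ * ‖g‖ := abs_real_inner_le_norm x g
  have ha : 0 < aEl u x := Real.sqrt_pos.2 (by positivity)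
  have ha2 : (aEl u x) ^ 2 = 1 + ‖g‖ ^ 2 := Real.sq_sqrt (by positivity)
  set A := Real.sqrt (‖x‖ ^ 2 + (u x) ^ 2) with hA
  have hA0 : 0 ≤ A := Real.sqrt_nonneg _
  have hA2 : A ^ 2 = ‖x‖ ^ 2 + (u x) ^ 2 := Real.sq_sqrt (by positivity)
  rw [abs_div, div_le_iff₀ (by positivity), abs_of_pos (show (0:ℝ) < 2 * aEl u x by linarith)]
  have h1 : |⟪x, g⟫ - u x| ≤ ‖x‖ * ‖g‖ + |u x| :=
    (abs_sub _ _).trans (by gcongr)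
  have key : ‖x‖ * ‖g‖ + |u x| ≤ A * aEl u x := by
    nlinarith [sq_nonneg (‖x‖ - |u x| * ‖g‖), sq_abs (u x), norm_nonneg x,
      norm_nonneg g, abs_nonneg (u x), mul_nonneg hA0 ha.le,
      sq_nonneg (A * aEl u x + (‖x‖ * ‖g‖ + |u x|)),
      mul_nonneg (norm_nonneg x) (norm_nonneg g)]
  calc |⟪x, g⟫ - u x| ≤ A * aEl u x := h1.trans key
    _ = 1 / 2 * A * (2 * aEl u x) := by ring
end
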